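/- arXiv:2308.06955 — 4 statements merged into one kernel-verified Lean document; each statement's English description precedes it below -/
import Mathlib

section
/- The unique β ∈ (0,1) with β·m = 1 − e^{−(1−β)·m} is strictly decreasing as a function of m on (0,∞). -/
theorem ec_threshold_strictAnti (β : ℝ → ℝ)
    (h : ∀ m : ℝ, 0 < m →
      β m ∈ Set.Ioo (0 : ℝ) 1 ∧ β m * m = 1 - Real.exp (-(1 - β m) * m)) :
    StrictAntiOn β (Set.Ioi (0 : ℝ)) := by
  intro m₁ hm₁ m₂ hm₂ h12
  simp only [Set.mem_Ioi] at hm₁ hm₂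
  obtain ⟨⟨hb10, hb11⟩, he1⟩ := h m₁ hm₁
  obtain ⟨⟨hb20, hb21⟩, he2⟩ := h m₂ hm₂
  by_contra hle
  push_neg at hle
  set b := β m₁ with hb
  have hm₂0 : m₂ ≠ 0 := ne_of_gt hm₂
  -- strict convexity of exp at points 0 and (b-1)*m₂
  have hne : (0 : ℝ) ≠ (b - 1) * m₂ := by
    have : (b - 1) * m₂ < 0 := mul_neg_of_neg_of_pos (by linarith) hm₂
    linarith
  have hapos : (0 : ℝ) < 1 - m₁ / m₂ := by
    have : m₁ / m₂ < 1 := (div_lt_one hm₂).mpr h12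
    linarith
  have hbpos : (0 : ℝ) < m₁ / m₂ := div_pos hm₁ hm₂
  have hconv := strictConvexOn_exp.2 (Set.mem_univ (0 : ℝ))
    (Set.mem_univ ((b - 1) * m₂)) hne hapos hbpos (by ring)
  simp only [smul_eq_mul, mul_zero, zero_add, Real.exp_zero, mul_one] at hconv
  have harg : m₁ / m₂ * ((b - 1) * m₂) = (b - 1) * m₁ := by
    field_simp
  rw [harg] at hconv
  -- use the equation at m₁: exp ((b-1)*m₁) = 1 - b * m₁
  have he1' : Real.exp ((b - 1) * m₁) = 1 - b * m₁ := by
    have : -(1 - b) * m₁ = (b - 1) * m₁ := by ring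
    rw [← this]; linarith [he1]
  rw [he1'] at hconv
  -- key inequality: 0 < b * m₂ - 1 + exp ((b-1)*m₂)
  have hkey : 0 < b * m₂ - 1 + Real.exp ((b - 1) * m₂) := by
    have h1 : 1 - b * m₁ < 1 - m₁ / m₂ + m₁ / m₂ * Real.exp ((b - 1) * m₂) := hconv
    have h2 : m₁ / m₂ * m₂ = m₁ := div_mul_cancel₀ m₁ hm₂0
    nlinarith [mul_pos hbpos (Real.exp_pos ((b - 1) * m₂))]
  -- monotonicity in β at m₂ gives contradiction
  have hexp : Real.exp ((b - 1) * m₂) ≤ Real.exp ((β m₂ - 1) * m₂) := by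
    apply Real.exp_le_exp.mpr
    nlinarith
  have he2' : β m₂ * m₂ - 1 + Real.exp ((β m₂ - 1) * m₂) = 0 := by
    have : -(1 - β m₂) * m₂ = (β m₂ - 1) * m₂ := by ring
    rw [← this]; linarith [he2]
  nlinarith [mul_le_mul_of_nonneg_right hle (le_of_lt hm₂)]
end

section
/- For m = 1, the unique β ∈ (0,1) satisfying β = 1 − e^{−(1−β)} satisfies 0.43 < β < 0.44. -/
lemma exp_neg_057_lt : Real.exp (-0.57) < 0.57 := by
  have hb := Real.exp_bound (x := -0.57) (by norm_num [abs_of_nonpos]) (n := 4) (by norm_num)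
  rw [abs_sub_le_iff] at hb
  have := hb.1
  have hs : ∑ m ∈ Finset.range 4, (-0.57 : ℝ) ^ m / (m.factorial : ℝ) = 1 - 0.57 + 0.57^2/2 - 0.57^3/6 := by
    simp [Finset.sum_range_succ, Nat.factorial]; ring
  rw [hs] at this
  have habs : |(-0.57 : ℝ)| = 0.57 := by norm_num [abs_of_nonpos]
  rw [habs] at this
  norm_num [Nat.factorial] at this ⊢
  linarith

lemma exp_neg_056_gt : (0.56 : ℝ) < Real.exp (-0.56) := by
  have hb := Real.exp_bound (x := -0.56) (by norm_num [abs_of_nonpos]) (n := 4) (by norm_num)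
  rw [abs_sub_le_iff] at hb
  have := hb.2
  have hs : ∑ m ∈ Finset.range 4, (-0.56 : ℝ) ^ m / (m.factorial : ℝ) = 1 - 0.56 + 0.56^2/2 - 0.56^3/6 := by
    simp [Finset.sum_range_succ, Nat.factorial]; ring
  rw [hs] at this
  have habs : |(-0.56 : ℝ)| = 0.56 := by norm_num [abs_of_nonpos]
  rw [habs] at this
  norm_num [Nat.factorial] at this ⊢
  linarith

theorem ec_threshold_m_one (β : ℝ) (hβ : β ∈ Set.Ioo (0 : ℝ) 1)
    (h : β = 1 - Real.exp (-(1 - β))) : 0.43 < β ∧ β < 0.44 := by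
  constructor
  · by_contra hle
    push_neg at hle
    have h1 : Real.exp (-(1 - β)) ≤ Real.exp (-0.57) := by
      apply Real.exp_le_exp.mpr; linarith
    have := exp_neg_057_lt
    linarith
  · by_contra hle
    push_neg at hle
    have h1 : Real.exp (-0.56) ≤ Real.exp (-(1 - β)) := by
      apply Real.exp_le_exp.mpr; linarith
    have := exp_neg_056_gt
    linarith
end

section
/- For m = 5, the unique β ∈ (0,1) satisfying 5β = 1 − e^{−5(1−β)} satisfies 0.19 < β < 0.20. -/
theorem ec_threshold_m_five (β : ℝ) (hβ : β ∈ Set.Ioo (0 : ℝ) 1)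
    (h : 5 * β = 1 - Real.exp (-5 * (1 - β))) : 0.19 < β ∧ β < 0.20 := by
  obtain ⟨hb0, hb1⟩ := hβ
  have hpos := Real.exp_pos (-5 * (1 - β))
  constructor
  · by_contra hle
    push_neg at hle
    have h1 : -5 * (1 - β) ≤ -4.05 := by nlinarith
    have h2 : Real.exp (-5 * (1 - β)) ≤ Real.exp (-4.05) := Real.exp_le_exp.mpr h1
    have h3 : Real.exp (-4.05) < 0.05 := by
      have he : (2.7182818283 : ℝ) < Real.exp 1 := Real.exp_one_gt_d9
      have h4 : (20 : ℝ) < Real.exp 4 := by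
        have : Real.exp 4 = (Real.exp 1) ^ 4 := by
          rw [← Real.exp_nat_mul]; norm_num
        rw [this]
        have : (2.7 : ℝ) ^ 4 < (Real.exp 1) ^ 4 :=
          pow_lt_pow_left₀ (by linarith) (by norm_num) (by norm_num)
        nlinarith
      have h5 : Real.exp 4 ≤ Real.exp 4.05 := Real.exp_le_exp.mpr (by norm_num)
      have h6 : Real.exp (-4.05) = 1 / Real.exp 4.05 := by
        rw [Real.exp_neg]; ring
      rw [h6]
      rw [div_lt_iff₀ (by positivity)]
      nlinarith
    nlinarith
  · nlinarith
end

section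
/- For m = 5, the unique β ∈ (0,1) satisfying 5β = 2(1 − e^{−5(1−β)}) satisfies 0.38 < β < 0.39. -/
theorem nsplit_threshold_m_five (β : ℝ) (hβ : β ∈ Set.Ioo (0 : ℝ) 1)
    (h : 5 * β = 2 * (1 - Real.exp (-5 * (1 - β)))) : 0.38 < β ∧ β < 0.39 := by
  obtain ⟨hβ0, hβ1⟩ := hβ
  have he1 : Real.exp 1 < 2.7182818286 := Real.exp_one_lt_d9
  have he1' : (2.7182818283 : ℝ) < Real.exp 1 := Real.exp_one_gt_d9
  have hexp3 : Real.exp 3 = Real.exp 1 ^ 3 := by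
    rw [← Real.exp_nat_mul]; norm_num
  have hcube : Real.exp 1 ^ 3 > (2.7182818283:ℝ)^3 :=
    pow_lt_pow_left₀ he1' (by norm_num) (by norm_num)
  have hcube' : Real.exp 1 ^ 3 < (2.7182818286:ℝ)^3 :=
    pow_lt_pow_left₀ he1 (le_of_lt (Real.exp_pos 1)) (by norm_num)
  have h3gt : (20 : ℝ) < Real.exp 3 := by
    rw [hexp3]; nlinarith
  have hexp05 : Real.exp 0.05 ≤ 20 / 19 := by
    have := Real.add_one_le_exp (-0.05)
    rw [Real.exp_neg] at this
    have hpos := Real.exp_pos (0.05 : ℝ)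
    have hinv : Real.exp 0.05 * (Real.exp 0.05)⁻¹ = 1 := mul_inv_cancel₀ (ne_of_gt hpos)
    nlinarith
  have h305 : Real.exp 3.05 < 40 := by
    have : Real.exp 3.05 = Real.exp 3 * Real.exp 0.05 := by
      rw [← Real.exp_add]; norm_num
    rw [this, hexp3]
    have hpos := Real.exp_pos (0.05 : ℝ)
    nlinarith [pow_pos (Real.exp_pos 1) 3]
  constructor
  · by_contra hle
    push_neg at hle
    have harg : (-5 : ℝ) * (1 - β) ≤ -3 := by linarith
    have hE : Real.exp (-5 * (1 - β)) ≤ Real.exp (-3) := Real.exp_le_exp.mpr harg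
    have : Real.exp (-3) < 1 / 20 := by
      rw [Real.exp_neg]
      rw [inv_lt_comm₀ (Real.exp_pos 3) (by norm_num)] at *
      · linarith
    linarith
  · by_contra hge
    push_neg at hge
    have harg : (-3.05 : ℝ) ≤ -5 * (1 - β) := by linarith
    have hE : Real.exp (-3.05) ≤ Real.exp (-5 * (1 - β)) := Real.exp_le_exp.mpr harg
    have : (1 / 40 : ℝ) < Real.exp (-3.05) := by
      rw [Real.exp_neg]
      have := Real.exp_pos (3.05 : ℝ)
      rw [lt_inv_comm₀ (by norm_num) this]
      linarith
    linarith
end
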